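/- (Stability of the DS inpainting scheme.) Let h > 0, δ ∈ [0,1], and 0 ≤ τ ≤ min{τ_D, τ_M}, where τ_D := h²/(4−2δ) and τ_M := h/(√2·(1−δ) + δ). Let f : ℤ × ℤ → ℝ satisfy m ≤ f(i,j) ≤ M for all (i,j). For each k ≥ 0 let g^k : ℤ × ℤ → [0,1] be an arbitrary weight field and s^k : ℤ × ℤ → {−1, 0, 1} an arbitrary sign field. Define the explicit diffusion–shock iteration u⁰ := f and u^{k+1}(i,j) := u^k(i,j) + τ·g^k(i,j)·(Δ_h u^k)(i,j) + τ·(1 − g^k(i,j))·(if s^k(i,j) = −1 then (D u^k)(i,j) else if s^k(i,j) = 1 then −(E u^k)(i,j) else 0). Then the discrete maximum–minimum principle holds: m ≤ u^k(i,j) ≤ M for all (i,j) ∈ ℤ × ℤ and all k ≥ 0. -/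
import Mathlib


/-- The weighted discrete Laplacian with grid size `h` and weight `δ`. -/
noncomputable def discreteLaplacian (h δ : ℝ) (u : ℤ × ℤ → ℝ) (p : ℤ × ℤ) : ℝ :=
  ((1 - δ) / h ^ 2) *
      (u (p.1 + 1, p.2) + u (p.1 - 1, p.2) + u (p.1, p.2 + 1) + u (p.1, p.2 - 1) - 4 * u p)
    + (δ / (2 * h ^ 2)) *
      (u (p.1 + 1, p.2 + 1) + u (p.1 - 1, p.2 - 1) + u (p.1 - 1, p.2 + 1) + u (p.1 + 1, p.2 - 1)
        - 4 * u p)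

/-- The weighted Rouy–Tourin discretisation of the dilation speed `|∇u|`. -/
noncomputable def dilationSpeed (h δ : ℝ) (u : ℤ × ℤ → ℝ) (p : ℤ × ℤ) : ℝ :=
  ((1 - δ) / h) *
      Real.sqrt
        ((max (u (p.1 + 1, p.2) - u p) (max (u (p.1 - 1, p.2) - u p) 0)) ^ 2
          + (max (u (p.1, p.2 + 1) - u p) (max (u (p.1, p.2 - 1) - u p) 0)) ^ 2)
    + (δ / (Real.sqrt 2 * h)) *
      Real.sqrt
        ((max (u (p.1 + 1, p.2 + 1) - u p) (max (u (p.1 - 1, p.2 - 1) - u p) 0)) ^ 2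
          + (max (u (p.1 - 1, p.2 + 1) - u p) (max (u (p.1 + 1, p.2 - 1) - u p) 0)) ^ 2)

/-- The weighted Rouy–Tourin discretisation of the erosion speed `|∇u|` (downwind version). -/
noncomputable def erosionSpeed (h δ : ℝ) (u : ℤ × ℤ → ℝ) (p : ℤ × ℤ) : ℝ :=
  ((1 - δ) / h) *
      Real.sqrt
        ((max (u p - u (p.1 + 1, p.2)) (max (u p - u (p.1 - 1, p.2)) 0)) ^ 2
          + (max (u p - u (p.1, p.2 + 1)) (max (u p - u (p.1, p.2 - 1)) 0)) ^ 2)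
    + (δ / (Real.sqrt 2 * h)) *
      Real.sqrt
        ((max (u p - u (p.1 + 1, p.2 + 1)) (max (u p - u (p.1 - 1, p.2 - 1)) 0)) ^ 2
          + (max (u p - u (p.1 - 1, p.2 + 1)) (max (u p - u (p.1 + 1, p.2 - 1)) 0)) ^ 2)

-- helper: sqrt bound
lemma DS_sqrt_bound {x y c : ℝ} (hx0 : 0 ≤ x) (hy0 : 0 ≤ y) (hx : x ≤ c) (hy : y ≤ c) :
    Real.sqrt (x ^ 2 + y ^ 2) ≤ Real.sqrt 2 * c := by
  have hc : 0 ≤ c := le_trans hx0 hx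
  have h1 : x ^ 2 + y ^ 2 ≤ 2 * c ^ 2 := by nlinarith
  calc Real.sqrt (x ^ 2 + y ^ 2) ≤ Real.sqrt (2 * c ^ 2) := Real.sqrt_le_sqrt h1
    _ = Real.sqrt 2 * c := by
        rw [Real.sqrt_mul (by norm_num), Real.sqrt_sq hc]

lemma DS_dilation_le (h δ : ℝ) (hh : 0 < h) (hδ0 : 0 ≤ δ) (hδ1 : δ ≤ 1)
    (u : ℤ × ℤ → ℝ) (M : ℝ) (hu : ∀ q, u q ≤ M) (p : ℤ × ℤ) :
    dilationSpeed h δ u p ≤ ((Real.sqrt 2 * (1 - δ) + δ) / h) * (M - u p) := by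
  have hc : 0 ≤ M - u p := by linarith [hu p]
  have hmax : ∀ a b : ℝ, a ≤ M → b ≤ M →
      0 ≤ max (a - u p) (max (b - u p) 0) ∧ max (a - u p) (max (b - u p) 0) ≤ M - u p := by
    intro a b ha hb
    constructor
    · exact le_trans (le_max_right _ _) (le_max_right _ _)
    · exact max_le (by linarith) (max_le (by linarith) hc)
  have hs2 : (0:ℝ) < Real.sqrt 2 := by positivity
  have hsq2 : Real.sqrt 2 * Real.sqrt 2 = 2 := Real.mul_self_sqrt (by norm_num)
  obtain ⟨h1a, h1b⟩ := hmax (u (p.1+1,p.2)) (u (p.1-1,p.2)) (hu _) (hu _)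
  obtain ⟨h2a, h2b⟩ := hmax (u (p.1,p.2+1)) (u (p.1,p.2-1)) (hu _) (hu _)
  obtain ⟨h3a, h3b⟩ := hmax (u (p.1+1,p.2+1)) (u (p.1-1,p.2-1)) (hu _) (hu _)
  obtain ⟨h4a, h4b⟩ := hmax (u (p.1-1,p.2+1)) (u (p.1+1,p.2-1)) (hu _) (hu _)
  have B1 := DS_sqrt_bound h1a h2a h1b h2b
  have B2 := DS_sqrt_bound h3a h4a h3b h4b
  have S1 := Real.sqrt_nonneg ((max (u (p.1 + 1, p.2) - u p) (max (u (p.1 - 1, p.2) - u p) 0)) ^ 2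
          + (max (u (p.1, p.2 + 1) - u p) (max (u (p.1, p.2 - 1) - u p) 0)) ^ 2)
  have S2 := Real.sqrt_nonneg ((max (u (p.1 + 1, p.2 + 1) - u p) (max (u (p.1 - 1, p.2 - 1) - u p) 0)) ^ 2
          + (max (u (p.1 - 1, p.2 + 1) - u p) (max (u (p.1 + 1, p.2 - 1) - u p) 0)) ^ 2)
  unfold dilationSpeed
  have e1 : ((1 - δ) / h) * (Real.sqrt 2 * (M - u p)) + (δ / (Real.sqrt 2 * h)) * (Real.sqrt 2 * (M - u p))
      = ((Real.sqrt 2 * (1 - δ) + δ) / h) * (M - u p) := by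
    field_simp
  calc _ ≤ ((1 - δ) / h) * (Real.sqrt 2 * (M - u p)) + (δ / (Real.sqrt 2 * h)) * (Real.sqrt 2 * (M - u p)) := by
        have c1 : (0:ℝ) ≤ (1 - δ) / h := div_nonneg (by linarith) hh.le
        have c2 : (0:ℝ) ≤ δ / (Real.sqrt 2 * h) := by positivity
        gcongr
    _ = _ := e1

lemma DS_dilation_nonneg (h δ : ℝ) (hh : 0 < h) (hδ0 : 0 ≤ δ) (hδ1 : δ ≤ 1)
    (u : ℤ × ℤ → ℝ) (p : ℤ × ℤ) : 0 ≤ dilationSpeed h δ u p := by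
  unfold dilationSpeed
  have c1 : (0:ℝ) ≤ (1 - δ) / h := div_nonneg (by linarith) hh.le
  have c2 : (0:ℝ) ≤ δ / (Real.sqrt 2 * h) := by positivity
  positivity

lemma DS_erosion_le (h δ : ℝ) (hh : 0 < h) (hδ0 : 0 ≤ δ) (hδ1 : δ ≤ 1)
    (u : ℤ × ℤ → ℝ) (m : ℝ) (hu : ∀ q, m ≤ u q) (p : ℤ × ℤ) :
    erosionSpeed h δ u p ≤ ((Real.sqrt 2 * (1 - δ) + δ) / h) * (u p - m) := by
  have hc : 0 ≤ u p - m := by linarith [hu p]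
  have hmax : ∀ a b : ℝ, m ≤ a → m ≤ b →
      0 ≤ max (u p - a) (max (u p - b) 0) ∧ max (u p - a) (max (u p - b) 0) ≤ u p - m := by
    intro a b ha hb
    constructor
    · exact le_trans (le_max_right _ _) (le_max_right _ _)
    · exact max_le (by linarith) (max_le (by linarith) hc)
  have hs2 : (0:ℝ) < Real.sqrt 2 := by positivity
  have hsq2 : Real.sqrt 2 * Real.sqrt 2 = 2 := Real.mul_self_sqrt (by norm_num)
  obtain ⟨h1a, h1b⟩ := hmax (u (p.1+1,p.2)) (u (p.1-1,p.2)) (hu _) (hu _)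
  obtain ⟨h2a, h2b⟩ := hmax (u (p.1,p.2+1)) (u (p.1,p.2-1)) (hu _) (hu _)
  obtain ⟨h3a, h3b⟩ := hmax (u (p.1+1,p.2+1)) (u (p.1-1,p.2-1)) (hu _) (hu _)
  obtain ⟨h4a, h4b⟩ := hmax (u (p.1-1,p.2+1)) (u (p.1+1,p.2-1)) (hu _) (hu _)
  have B1 := DS_sqrt_bound h1a h2a h1b h2b
  have B2 := DS_sqrt_bound h3a h4a h3b h4b
  unfold erosionSpeed
  have e1 : ((1 - δ) / h) * (Real.sqrt 2 * (u p - m)) + (δ / (Real.sqrt 2 * h)) * (Real.sqrt 2 * (u p - m))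
      = ((Real.sqrt 2 * (1 - δ) + δ) / h) * (u p - m) := by
    field_simp
  calc _ ≤ ((1 - δ) / h) * (Real.sqrt 2 * (u p - m)) + (δ / (Real.sqrt 2 * h)) * (Real.sqrt 2 * (u p - m)) := by
        have c1 : (0:ℝ) ≤ (1 - δ) / h := div_nonneg (by linarith) hh.le
        have c2 : (0:ℝ) ≤ δ / (Real.sqrt 2 * h) := by positivity
        gcongr
    _ = _ := e1

lemma DS_erosion_nonneg (h δ : ℝ) (hh : 0 < h) (hδ0 : 0 ≤ δ) (hδ1 : δ ≤ 1)
    (u : ℤ × ℤ → ℝ) (p : ℤ × ℤ) : 0 ≤ erosionSpeed h δ u p := by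
  unfold erosionSpeed
  have c1 : (0:ℝ) ≤ (1 - δ) / h := div_nonneg (by linarith) hh.le
  have c2 : (0:ℝ) ≤ δ / (Real.sqrt 2 * h) := by positivity
  positivity

lemma DS_lap_le (h δ : ℝ) (hh : 0 < h) (hδ0 : 0 ≤ δ) (hδ1 : δ ≤ 1)
    (u : ℤ × ℤ → ℝ) (M : ℝ) (hu : ∀ q, u q ≤ M) (p : ℤ × ℤ) :
    discreteLaplacian h δ u p ≤ ((4 - 2 * δ) / h ^ 2) * (M - u p) := by
  have ha : (0:ℝ) ≤ (1 - δ) / h ^ 2 := div_nonneg (by linarith) (by positivity)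
  have hb : (0:ℝ) ≤ δ / (2 * h ^ 2) := div_nonneg hδ0 (by positivity)
  have hX : u (p.1+1,p.2) + u (p.1-1,p.2) + u (p.1,p.2+1) + u (p.1,p.2-1) - 4 * u p
      ≤ 4 * (M - u p) := by
    have := hu (p.1+1,p.2); have := hu (p.1-1,p.2); have := hu (p.1,p.2+1); have := hu (p.1,p.2-1)
    linarith
  have hY : u (p.1+1,p.2+1) + u (p.1-1,p.2-1) + u (p.1-1,p.2+1) + u (p.1+1,p.2-1) - 4 * u p
      ≤ 4 * (M - u p) := by
    have := hu (p.1+1,p.2+1); have := hu (p.1-1,p.2-1); have := hu (p.1-1,p.2+1); have := hu (p.1+1,p.2-1)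
    linarith
  unfold discreteLaplacian
  calc _ ≤ ((1 - δ) / h ^ 2) * (4 * (M - u p)) + (δ / (2 * h ^ 2)) * (4 * (M - u p)) :=
        add_le_add (mul_le_mul_of_nonneg_left hX ha) (mul_le_mul_of_nonneg_left hY hb)
    _ = ((4 - 2 * δ) / h ^ 2) * (M - u p) := by field_simp; ring

lemma DS_lap_ge (h δ : ℝ) (hh : 0 < h) (hδ0 : 0 ≤ δ) (hδ1 : δ ≤ 1)
    (u : ℤ × ℤ → ℝ) (m : ℝ) (hu : ∀ q, m ≤ u q) (p : ℤ × ℤ) :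
    -(((4 - 2 * δ) / h ^ 2) * (u p - m)) ≤ discreteLaplacian h δ u p := by
  have ha : (0:ℝ) ≤ (1 - δ) / h ^ 2 := div_nonneg (by linarith) (by positivity)
  have hb : (0:ℝ) ≤ δ / (2 * h ^ 2) := div_nonneg hδ0 (by positivity)
  have hX : -(4 * (u p - m)) ≤
      u (p.1+1,p.2) + u (p.1-1,p.2) + u (p.1,p.2+1) + u (p.1,p.2-1) - 4 * u p := by
    have := hu (p.1+1,p.2); have := hu (p.1-1,p.2); have := hu (p.1,p.2+1); have := hu (p.1,p.2-1)
    linarith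
  have hY : -(4 * (u p - m)) ≤
      u (p.1+1,p.2+1) + u (p.1-1,p.2-1) + u (p.1-1,p.2+1) + u (p.1+1,p.2-1) - 4 * u p := by
    have := hu (p.1+1,p.2+1); have := hu (p.1-1,p.2-1); have := hu (p.1-1,p.2+1); have := hu (p.1+1,p.2-1)
    linarith
  unfold discreteLaplacian
  calc -(((4 - 2 * δ) / h ^ 2) * (u p - m))
      = ((1 - δ) / h ^ 2) * (-(4 * (u p - m))) + (δ / (2 * h ^ 2)) * (-(4 * (u p - m))) := by
        field_simp; ring
    _ ≤ _ := add_le_add (mul_le_mul_of_nonneg_left hX ha) (mul_le_mul_of_nonneg_left hY hb)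

set_option maxHeartbeats 1000000 in
/-- **Stability of the diffusion–shock inpainting scheme.**
The explicit diffusion–shock scheme satisfies a discrete maximum–minimum principle
whenever `τ ≤ min (τ_D, τ_M)`, for arbitrary weight fields `g^k` with values in `[0,1]`
and arbitrary sign fields `s^k` with values in `{-1, 0, 1}`. -/
theorem diffusion_shock_scheme_max_min_principle
    (h δ τ : ℝ) (hh : 0 < h) (hδ : δ ∈ Set.Icc (0 : ℝ) 1)
    (hτ0 : 0 ≤ τ)
    (hτ : τ ≤ min (h ^ 2 / (4 - 2 * δ)) (h / (Real.sqrt 2 * (1 - δ) + δ)))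
    (m M : ℝ) (f : ℤ × ℤ → ℝ) (hf : ∀ p, m ≤ f p ∧ f p ≤ M)
    (g : ℕ → ℤ × ℤ → ℝ) (hg : ∀ k p, g k p ∈ Set.Icc (0 : ℝ) 1)
    (s : ℕ → ℤ × ℤ → ℤ) (hs : ∀ k p, s k p = -1 ∨ s k p = 0 ∨ s k p = 1)
    (u : ℕ → ℤ × ℤ → ℝ) (hu0 : u 0 = f)
    (hustep : ∀ k p, u (k + 1) p =
      u k p + τ * g k p * discreteLaplacian h δ (u k) p
        + τ * (1 - g k p) *
            (if s k p = -1 then dilationSpeed h δ (u k) p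
              else if s k p = 1 then -erosionSpeed h δ (u k) p
              else 0)) :
    ∀ k p, m ≤ u k p ∧ u k p ≤ M := by
  obtain ⟨hδ0, hδ1⟩ := hδ
  have hc1 : (0:ℝ) < 4 - 2 * δ := by linarith
  have hs2 : (1:ℝ) ≤ Real.sqrt 2 := by
    rw [show (1:ℝ) = Real.sqrt 1 from Real.sqrt_one.symm]
    exact Real.sqrt_le_sqrt (by norm_num)
  have hc2 : (0:ℝ) < Real.sqrt 2 * (1 - δ) + δ := by nlinarith
  have hτ1 : τ * (4 - 2 * δ) ≤ h ^ 2 := by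
    have := le_trans hτ (min_le_left _ _)
    calc τ * (4 - 2 * δ) ≤ (h ^ 2 / (4 - 2 * δ)) * (4 - 2 * δ) := by
          exact mul_le_mul_of_nonneg_right this hc1.le
      _ = h ^ 2 := div_mul_cancel₀ _ hc1.ne'
  have hτ2 : τ * (Real.sqrt 2 * (1 - δ) + δ) ≤ h := by
    have := le_trans hτ (min_le_right _ _)
    calc τ * (Real.sqrt 2 * (1 - δ) + δ)
        ≤ (h / (Real.sqrt 2 * (1 - δ) + δ)) * (Real.sqrt 2 * (1 - δ) + δ) :=
          mul_le_mul_of_nonneg_right this hc2.le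
      _ = h := div_mul_cancel₀ _ hc2.ne'
  have hd1 : τ * ((4 - 2 * δ) / h ^ 2) ≤ 1 := by
    rw [show τ * ((4 - 2 * δ) / h ^ 2) = τ * (4 - 2 * δ) / h ^ 2 by ring]
    exact (div_le_one (by positivity)).2 hτ1
  have hd2 : τ * ((Real.sqrt 2 * (1 - δ) + δ) / h) ≤ 1 := by
    rw [show τ * ((Real.sqrt 2 * (1 - δ) + δ) / h) = τ * (Real.sqrt 2 * (1 - δ) + δ) / h by ring]
    exact (div_le_one hh).2 hτ2
  intro k
  induction k with
  | zero => intro p; rw [hu0]; exact hf p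
  | succ k ih =>
    intro p
    have hm : ∀ q, m ≤ u k q := fun q => (ih q).1
    have hM : ∀ q, u k q ≤ M := fun q => (ih q).2
    obtain ⟨hg0, hg1⟩ := hg k p
    have hL1 := DS_lap_le h δ hh hδ0 hδ1 (u k) M hM p
    have hL2 := DS_lap_ge h δ hh hδ0 hδ1 (u k) m hm p
    have hMm : 0 ≤ M - u k p := sub_nonneg.2 (hM p)
    have hmm : 0 ≤ u k p - m := sub_nonneg.2 (hm p)
    have key : ∀ S : ℝ,
        -(((Real.sqrt 2 * (1 - δ) + δ) / h) * (u k p - m)) ≤ S →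
        S ≤ ((Real.sqrt 2 * (1 - δ) + δ) / h) * (M - u k p) →
        m ≤ u k p + τ * g k p * discreteLaplacian h δ (u k) p + τ * (1 - g k p) * S ∧
          u k p + τ * g k p * discreteLaplacian h δ (u k) p + τ * (1 - g k p) * S ≤ M := by
      intro S hS1 hS2
      have htg : 0 ≤ τ * g k p := mul_nonneg hτ0 hg0
      have htg' : 0 ≤ τ * (1 - g k p) := mul_nonneg hτ0 (by linarith)
      have A : τ * g k p * discreteLaplacian h δ (u k) p ≤ g k p * (M - u k p) := by
        have h1 : τ * g k p * discreteLaplacian h δ (u k) p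
            ≤ τ * g k p * (((4 - 2 * δ) / h ^ 2) * (M - u k p)) :=
          mul_le_mul_of_nonneg_left hL1 htg
        nlinarith [mul_nonneg hg0 hMm]
      have B : -(g k p * (u k p - m)) ≤ τ * g k p * discreteLaplacian h δ (u k) p := by
        have h1 : τ * g k p * (-(((4 - 2 * δ) / h ^ 2) * (u k p - m)))
            ≤ τ * g k p * discreteLaplacian h δ (u k) p :=
          mul_le_mul_of_nonneg_left hL2 htg
        nlinarith [mul_nonneg hg0 hmm]
      have C : τ * (1 - g k p) * S ≤ (1 - g k p) * (M - u k p) := by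
        have h1 : τ * (1 - g k p) * S
            ≤ τ * (1 - g k p) * (((Real.sqrt 2 * (1 - δ) + δ) / h) * (M - u k p)) :=
          mul_le_mul_of_nonneg_left hS2 htg'
        nlinarith [mul_nonneg (sub_nonneg.2 hg1) hMm]
      have D : -((1 - g k p) * (u k p - m)) ≤ τ * (1 - g k p) * S := by
        have h1 : τ * (1 - g k p) * (-(((Real.sqrt 2 * (1 - δ) + δ) / h) * (u k p - m)))
            ≤ τ * (1 - g k p) * S :=
          mul_le_mul_of_nonneg_left hS1 htg'
        nlinarith [mul_nonneg (sub_nonneg.2 hg1) hmm]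
      constructor <;> linarith
    rcases hs k p with hsp | hsp | hsp <;> rw [hustep k p] <;> simp only [hsp]
    · simp only [if_true]
      exact key _ (le_trans (neg_nonpos.2 (mul_nonneg (div_nonneg hc2.le hh.le) hmm))
          (DS_dilation_nonneg h δ hh hδ0 hδ1 (u k) p))
        (DS_dilation_le h δ hh hδ0 hδ1 (u k) M hM p)
    · rw [if_neg (by decide), if_neg (by decide)]
      exact key 0 (neg_nonpos.2 (mul_nonneg (div_nonneg hc2.le hh.le) hmm))
        (mul_nonneg (div_nonneg hc2.le hh.le) hMm)
    · simp only [if_true]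
      exact key _ (neg_le_neg (DS_erosion_le h δ hh hδ0 hδ1 (u k) m hm p))
        (le_trans (neg_nonpos.2 (DS_erosion_nonneg h δ hh hδ0 hδ1 (u k) p))
          (mul_nonneg (div_nonneg hc2.le hh.le) hMm))
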